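/- arXiv:1607.03471 — 4 statements merged into one kernel-verified Lean document; each statement's English description precedes it below -/
import Mathlib

section
/- A graph is cop-win if and only if it has a dismantling ordering. -/
open Classical

/-- A finite reflexive graph: adjacency is symmetric and every vertex is
adjacent to itself (closed neighborhood `N[v] = {u | Adj v u}`). -/
structure RefGraph (V : Type*) where
  Adj : V → V → Prop
  symm : ∀ u v, Adj u v → Adj v u
  refl : ∀ v, Adj v v

namespace RefGraph

variable {V : Type*}

/-- `w` strictly corners `v` within the induced subgraph on `S`,
i.e. `N_S[v] ⊊ N_S[w]`. -/
def StrictCornersIn (G : RefGraph V) (S : Set V) (w v : V) : Prop :=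
  w ∈ S ∧ v ∈ S ∧ (∀ u ∈ S, G.Adj v u → G.Adj w u) ∧ ∃ u ∈ S, G.Adj w u ∧ ¬ G.Adj v u

/-- `v` is a strict corner of the induced subgraph on `S`. -/
def IsStrictCorner (G : RefGraph V) (S : Set V) (v : V) : Prop :=
  ∃ w, G.StrictCornersIn S w v

/-- `S` induces a clique. -/
def IsCliqueSet (G : RefGraph V) (S : Set V) : Prop :=
  ∀ u ∈ S, ∀ v ∈ S, G.Adj u v

/-- `lvl k` is the vertex set of the graph `G_{k+1}` of the corner ranking
procedure: start with all vertices and repeatedly delete all strict corners. -/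
def lvl (G : RefGraph V) : ℕ → Set V
  | 0 => Set.univ
  | k + 1 => {v ∈ G.lvl k | ¬ G.IsStrictCorner (G.lvl k) v}

/-- The corner rank of a vertex: the stage (1-indexed) at which it is a strict
corner, or at which the remaining graph is a clique; `∞` if neither ever occurs. -/
noncomputable def cr (G : RefGraph V) (v : V) : ℕ∞ :=
  sInf {n : ℕ∞ | ∃ m : ℕ, n = (m : ℕ∞) + 1 ∧ v ∈ G.lvl m ∧
    (G.IsStrictCorner (G.lvl m) v ∨ G.IsCliqueSet (G.lvl m))}

/-- The vertex set of `Gₖ`: the vertices of corner rank at least `k`. -/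
def GkSet (G : RefGraph V) (k : ℕ) : Set V := {v | (k : ℕ∞) ≤ G.cr v}

/-- The corner rank of the graph: the largest corner rank of a vertex. -/
noncomputable def crGraph (G : RefGraph V) [Fintype V] : ℕ∞ :=
  Finset.univ.sup fun v => G.cr v

/-- The projection map `fₖ` on a single vertex `u` of `Gₖ`. -/
noncomputable def fk (G : RefGraph V) (k : ℕ) (u : V) : Set V :=
  if (k : ℕ∞) < G.cr u then {u}
  else {w | w ∈ G.GkSet (k + 1) ∧ G.StrictCornersIn (G.GkSet k) w u}

/-- The projection map `Fₖ`: `F₁` is the identity and `Fₖ₊₁ = fₖ ∘ Fₖ`. -/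
noncomputable def Fk (G : RefGraph V) : ℕ → V → Set V
  | 0, v => {v}
  | 1, v => {v}
  | k + 2, v => ⋃ u ∈ G.Fk (k + 1) v, G.fk (k + 1) u

/-- `r` is `k`-cornered by `c`: for `k = 0`, `c = r`; for `k ≥ 1`, some
`r' ∈ Fₖ(r)` is cornered by `c` in the subgraph induced by `V(Gₖ) ∪ {c}`. -/
def kCornered (G : RefGraph V) : ℕ → V → V → Prop
  | 0, c, r => c = r
  | k + 1, c, r => ∃ r' ∈ G.Fk (k + 1) r,
      ∀ u, (u ∈ G.GkSet (k + 1) ∨ u = c) → G.Adj r' u → G.Adj c u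

/-- With the cop at `c`, the vertex `r` is `k`-proj-safe: `cr r ≥ k` and some
`c' ∈ Fₖ(c)` is not adjacent to `r`. -/
def ProjSafe (G : RefGraph V) (k : ℕ) (c r : V) : Prop :=
  (k : ℕ∞) ≤ G.cr r ∧ ∃ c' ∈ G.Fk k c, ¬ G.Adj c' r

/-- The cop at `c` can win within `k` cop moves against the robber at `r`,
robber to move. -/
def WinWithin (G : RefGraph V) : ℕ → V → V → Prop
  | 0, c, r => c = r
  | k + 1, c, r => c = r ∨ ∀ r₁, G.Adj r r₁ → ∃ c₁, G.Adj c c₁ ∧ G.WinWithin k c₁ r₁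

/-- The cop at `c` can guarantee catching the robber at `r` within `n` cop
moves, cop to move. -/
def CanCatch (G : RefGraph V) : ℕ → V → V → Prop
  | 0, c, r => c = r
  | n + 1, c, r => c = r ∨ ∃ c', G.Adj c c' ∧
      (c' = r ∨ ∀ r', G.Adj r r' → G.CanCatch n c' r')

/-- The cop has a winning strategy: some initial placement from which she can
guarantee capture in some bounded number of moves, whatever the robber does. -/
def CopWin (G : RefGraph V) : Prop :=
  ∃ (n : ℕ) (c₀ : V), ∀ r₀ : V, G.CanCatch n c₀ r₀

/-- The capture time: the least `n` such that the cop has an initial placement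
guaranteeing capture within `n` cop moves. -/
noncomputable def capt (G : RefGraph V) : ℕ :=
  sInf {n : ℕ | ∃ c₀ : V, ∀ r₀ : V, G.CanCatch n c₀ r₀}

/-- A graph of finite corner rank `α` is `1`-cop-win if some vertex of corner
rank `α` is adjacent to every vertex of `G_{α-1}`. -/
def OneCopWin (G : RefGraph V) (α : ℕ) : Prop :=
  ∃ x, G.cr x = (α : ℕ∞) ∧ ∀ u, ((α - 1 : ℕ) : ℕ∞) ≤ G.cr u → G.Adj x u

/-- `r`-cop-win for `r ∈ {0,1}`. -/
def RCopWin (G : RefGraph V) (r α : ℕ) : Prop :=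
  (r = 1 ∧ G.OneCopWin α) ∨ (r = 0 ∧ ¬ G.OneCopWin α)

/-- The largest finite corner rank occurring in `G` (0 if none occurs). -/
noncomputable def gammaMax (G : RefGraph V) : ℕ :=
  sSup {n : ℕ | ∃ v, G.cr v = (n : ℕ∞)}

/-- `F_∞`: equal to `F_{γ+1}` where `γ` is the largest finite corner rank, and
the identity (`F₁`) when no vertex has finite corner rank. -/
noncomputable def Finf (G : RefGraph V) : V → Set V :=
  G.Fk (G.gammaMax + 1)

/-- `e` lists the vertices as a dismantling ordering: every vertex except the
last is cornered, in the induced subgraph on it and the later vertices, by some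
later vertex. -/
def IsDismantlingOrdering (G : RefGraph V) {n : ℕ} (e : Fin n ≃ V) : Prop :=
  ∀ i : Fin n, (i : ℕ) + 1 < n →
    ∃ j : Fin n, i < j ∧ e j ≠ e i ∧
      ∀ u, (∃ m : Fin n, i ≤ m ∧ e m = u) → G.Adj (e i) u → G.Adj (e j) u

/-- `G` has a dismantling ordering. -/
def HasDismantling (G : RefGraph V) [Fintype V] : Prop :=
  ∃ e : Fin (Fintype.card V) ≃ V, G.IsDismantlingOrdering e

end RefGraph
namespace CWAux

open RefGraph

variable {V : Type*}

/-- Induced subgraph on the complement of a vertex. -/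
def sub (G : RefGraph V) (v0 : V) : RefGraph {v : V // v ≠ v0} :=
  ⟨fun a b => G.Adj a b, fun _ _ h => G.symm _ _ h, fun _ => G.refl _⟩

/-- `v0` is dominated by `w0`. -/
def Dom (G : RefGraph V) (v0 w0 : V) : Prop :=
  v0 ≠ w0 ∧ ∀ u, G.Adj v0 u → G.Adj w0 u

/-- The retraction sending `v0` to `w0`. -/
noncomputable def ret (G : RefGraph V) {v0 w0 : V} (h : Dom G v0 w0) (u : V) :
    {v : V // v ≠ v0} :=
  if hu : u = v0 then ⟨w0, Ne.symm h.1⟩ else ⟨u, hu⟩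

theorem ret_apply_ne (G : RefGraph V) {v0 w0 : V} (h : Dom G v0 w0) {u : V}
    (hu : u ≠ v0) : ret G h u = ⟨u, hu⟩ := dif_neg hu

theorem ret_hom (G : RefGraph V) {v0 w0 : V} (h : Dom G v0 w0) {a b : V}
    (hab : G.Adj a b) : (sub G v0).Adj (ret G h a) (ret G h b) := by
  unfold ret
  split_ifs with ha hb hb
  · exact G.refl w0
  · exact h.2 b (ha ▸ hab)
  · exact G.symm _ _ (h.2 a (G.symm _ _ (hb ▸ hab)))
  · exact hab

theorem ret_catch (G : RefGraph V) {v0 w0 : V} (h : Dom G v0 w0)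
    (c : {v : V // v ≠ v0}) (r : V) (hc : c = ret G h r) (n : ℕ) :
    G.CanCatch (n + 1) (c : V) r := by
  by_cases hr : r = v0
  · refine Or.inr ⟨r, ?_, Or.inl rfl⟩
    have hcw : (c : V) = w0 := by rw [hc, hr]; simp [ret]
    rw [hcw, hr]
    exact h.2 v0 (G.refl v0)
  · exact Or.inl (by rw [hc, ret_apply_ne G h hr])

theorem lift_catch (G : RefGraph V) {v0 w0 : V} (h : Dom G v0 w0) :
    ∀ n (c : {v : V // v ≠ v0}) (r : V),
      (sub G v0).CanCatch n c (ret G h r) → G.CanCatch (n + 1) (c : V) r := by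
  intro n
  induction n with
  | zero =>
    intro c r hc
    exact ret_catch G h c r hc 0
  | succ n ih =>
    intro c r hc
    rcases hc with hc | ⟨c', hadj, hc'⟩
    · exact ret_catch G h c r hc (n + 1)
    · refine Or.inr ⟨c', hadj, ?_⟩
      rcases hc' with hc' | hall
      · by_cases hr : r = v0
        · refine Or.inr ?_
          intro r₁ hr₁
          have hw : G.Adj w0 r₁ := h.2 r₁ (hr ▸ hr₁)
          have hcr : (c' : V) = w0 := by rw [hc', hr]; simp [ret]
          exact Or.inr ⟨r₁, hcr ▸ hw, Or.inl rfl⟩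
        · exact Or.inl (by rw [hc', ret_apply_ne G h hr])
      · refine Or.inr ?_
        intro r₁ hr₁
        exact ih c' r₁ (hall (ret G h r₁) (ret_hom G h hr₁))

theorem push_catch (G : RefGraph V) {v0 w0 : V} (h : Dom G v0 w0) :
    ∀ n (c : V) (r : {v : V // v ≠ v0}),
      G.CanCatch n c (r : V) → (sub G v0).CanCatch n (ret G h c) r := by
  intro n
  induction n with
  | zero =>
    intro c r hc
    have hcr : c = (r : V) := hc
    show ret G h c = r
    rw [hcr, ret_apply_ne G h r.2]
  | succ n ih =>
    intro c r hc
    rcases hc with hc | ⟨c', hadj, hc'⟩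
    · exact Or.inl (by rw [hc]; exact ret_apply_ne G h r.2)
    · refine Or.inr ⟨ret G h c', ret_hom G h hadj, ?_⟩
      rcases hc' with hc' | hall
      · exact Or.inl (by rw [hc']; exact ret_apply_ne G h r.2)
      · refine Or.inr ?_
        intro r' hr'
        exact ih c' r' (hall (r' : V) hr')

end CWAux

namespace CWAux

variable {V : Type*}

theorem evade (G : RefGraph V) (hnd : ∀ v w, ¬ Dom G v w) :
    ∀ n (c r : V), ¬ G.Adj c r → ¬ G.CanCatch n c r := by
  intro n
  induction n with
  | zero =>
    intro c r hna hc
    exact hna (hc ▸ G.refl c)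
  | succ n ih =>
    intro c r hna hc
    rcases hc with hc | ⟨c', hadj, hc'⟩
    · exact hna (hc ▸ G.refl c)
    · have hrc : r ≠ c' := by
        rintro rfl
        exact hna hadj
      have hst : ¬ (∀ u, G.Adj r u → G.Adj c' u) := by
        intro hall
        exact hnd r c' ⟨hrc, hall⟩
      push_neg at hst
      obtain ⟨u, hru, hcu⟩ := hst
      rcases hc' with hc' | hall
      · exact hrc hc'.symm
      · exact ih c' u hcu (hall u hru)

theorem exists_dom (G : RefGraph V) [Fintype V] (hcard : 1 < Fintype.card V)
    (hw : G.CopWin) : ∃ v w, Dom G v w := by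
  by_contra hnd
  push_neg at hnd
  obtain ⟨n, c₀, hall⟩ := hw
  by_cases hadj : ∀ r, G.Adj c₀ r
  · obtain ⟨v, hv⟩ := Fintype.exists_ne_of_one_lt_card hcard c₀
    exact hnd v c₀ ⟨hv, fun u _ => hadj u⟩
  · push_neg at hadj
    obtain ⟨r₀, hr₀⟩ := hadj
    exact evade G hnd n c₀ r₀ hr₀ (hall r₀)

/-- Prepend `v0` to an enumeration of `V \ {v0}`. -/
noncomputable def consEquiv {m : ℕ} (v0 : V) (e' : Fin m ≃ {v : V // v ≠ v0}) :
    Fin (m + 1) ≃ V where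
  toFun i := if h : i = 0 then v0 else (e' (i.pred h) : V)
  invFun v := if h : v = v0 then 0 else (e'.symm ⟨v, h⟩).succ
  left_inv i := by
    by_cases h : i = 0
    · simp [h]
    · simp only [dif_neg h]
      rw [dif_neg (e' (i.pred h)).2]
      simp
  right_inv v := by
    by_cases h : v = v0
    · simp [h]
    · simp only [dif_neg h]
      rw [dif_neg (Fin.succ_ne_zero _)]
      simp

theorem consEquiv_zero {m : ℕ} (v0 : V) (e' : Fin m ≃ {v : V // v ≠ v0}) :
    consEquiv v0 e' 0 = v0 := by simp [consEquiv]

theorem consEquiv_succ {m : ℕ} (v0 : V) (e' : Fin m ≃ {v : V // v ≠ v0})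
    (i : Fin m) : consEquiv v0 e' i.succ = (e' i : V) := by
  have h : (i.succ : Fin (m + 1)) ≠ 0 := Fin.succ_ne_zero i
  simp [consEquiv, dif_neg h]

theorem dism_cons (G : RefGraph V) {v0 w0 : V} (hd : Dom G v0 w0) {m : ℕ}
    (e' : Fin m ≃ {v : V // v ≠ v0})
    (hde : (sub G v0).IsDismantlingOrdering e') :
    G.IsDismantlingOrdering (consEquiv v0 e') := by
  intro i hi
  by_cases h0 : i = 0
  · subst h0
    refine ⟨(e'.symm ⟨w0, Ne.symm hd.1⟩).succ, Fin.succ_pos _, ?_, ?_⟩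
    · rw [consEquiv_succ, consEquiv_zero, Equiv.apply_symm_apply]
      exact Ne.symm hd.1
    · intro u _ hadj
      rw [consEquiv_zero] at hadj
      rw [consEquiv_succ, Equiv.apply_symm_apply]
      exact hd.2 u hadj
  · -- i = k.succ
    set k := i.pred h0 with hk
    have hik : i = k.succ := (Fin.succ_pred i h0).symm
    have hklt : (k : ℕ) + 1 < m := by
      have : (i : ℕ) + 1 < m + 1 := hi
      have hiv : (i : ℕ) = (k : ℕ) + 1 := by
        rw [hik]; simp [Fin.val_succ]
      omega
    obtain ⟨j', hj'lt, hj'ne, hj'cond⟩ := hde k hklt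
    refine ⟨j'.succ, ?_, ?_, ?_⟩
    · rw [hik]
      exact Fin.succ_lt_succ_iff.mpr hj'lt
    · rw [hik, consEquiv_succ, consEquiv_succ]
      exact fun hh => hj'ne (Subtype.coe_injective hh)
    · intro u ⟨mm, hmmle, hmmeq⟩ hadj
      have hmm0 : mm ≠ 0 := by
        intro hh
        rw [hh] at hmmle
        have : (i : ℕ) ≤ 0 := hmmle
        have hiv : (i : ℕ) = (k : ℕ) + 1 := by rw [hik]; simp [Fin.val_succ]
        omega
      have hmmeq' : consEquiv v0 e' (mm.pred hmm0).succ = u := by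
        rw [Fin.succ_pred]; exact hmmeq
      rw [consEquiv_succ] at hmmeq'
      have hu : u ≠ v0 := hmmeq' ▸ (e' (mm.pred hmm0)).2
      have hpos : k ≤ mm.pred hmm0 := by
        have h1 : (i : ℕ) ≤ (mm : ℕ) := hmmle
        have hiv : (i : ℕ) = (k : ℕ) + 1 := by rw [hik]; simp [Fin.val_succ]
        have : (k : ℕ) ≤ (mm : ℕ) - 1 := by omega
        exact this
      have hadj' : (sub G v0).Adj (e' k) ⟨u, hu⟩ := by
        show G.Adj ((e' k : V)) u
        rw [← consEquiv_succ v0 e' k, ← hik]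
        exact hadj
      have := hj'cond ⟨u, hu⟩ ⟨mm.pred hmm0, hpos, Subtype.ext hmmeq'⟩ hadj'
      rw [consEquiv_succ]
      exact this

theorem dism_congr (G : RefGraph V) {n n' : ℕ} (h : n' = n) (e : Fin n ≃ V)
    (hd : G.IsDismantlingOrdering e) :
    G.IsDismantlingOrdering ((finCongr h).trans e) := by
  subst h
  simpa using hd

theorem copwin_to_dism :
    ∀ (n : ℕ) (V : Type*) [Fintype V] (G : RefGraph V),
      Fintype.card V = n → G.CopWin →
      ∃ e : Fin n ≃ V, G.IsDismantlingOrdering e := by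
  intro n
  induction n using Nat.strong_induction_on with
  | _ n ih =>
    intro V _ G hcard hw
    rcases Nat.lt_or_ge n 2 with hn | hn
    · refine ⟨(Fintype.equivFinOfCardEq hcard).symm, ?_⟩
      intro i hi
      exact absurd hi (by omega)
    · obtain ⟨v0, w0, hd⟩ := exists_dom G (by omega) hw
      haveI : Nonempty {v : V // v ≠ v0} := ⟨⟨w0, Ne.symm hd.1⟩⟩
      have hlt : Fintype.card {v : V // v ≠ v0} < n := by
        rw [← hcard]
        exact Fintype.card_subtype_lt (x := v0) (by simp)
      have hw' : (sub G v0).CopWin := by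
        obtain ⟨n₀, c₀, hall⟩ := hw
        exact ⟨n₀, ret G hd c₀, fun r => push_catch G hd n₀ c₀ r (hall r)⟩
      obtain ⟨e', hde⟩ := ih _ hlt {v : V // v ≠ v0} (sub G v0) rfl hw'
      have hcard' : n = Fintype.card {v : V // v ≠ v0} + 1 := by
        rw [← hcard, ← Fintype.card_fin (Fintype.card {v : V // v ≠ v0} + 1)]
        exact Fintype.card_congr (consEquiv v0 e').symm
      exact ⟨(finCongr hcard').trans (consEquiv v0 e'),
        dism_congr G hcard' _ (dism_cons G hd e' hde)⟩

end CWAux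

namespace CWAux

variable {V : Type*}

/-- The tail of an enumeration, as an enumeration of `V \ {e 0}`. -/
noncomputable def tailEquiv {m : ℕ} (e : Fin (m + 1) ≃ V) :
    Fin m ≃ {v : V // v ≠ e 0} where
  toFun i := ⟨e i.succ, fun hh => Fin.succ_ne_zero i (e.injective hh)⟩
  invFun v := (e.symm v.1).pred (fun hh => v.2 (by
    have := congrArg e hh
    rwa [Equiv.apply_symm_apply] at this))
  left_inv i := by simp
  right_inv v := by
    apply Subtype.ext
    simp [Fin.succ_pred]

theorem tailEquiv_coe {m : ℕ} (e : Fin (m + 1) ≃ V) (i : Fin m) :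
    (tailEquiv e i : V) = e i.succ := rfl

theorem dism_tail (G : RefGraph V) {m : ℕ} (e : Fin (m + 1) ≃ V)
    (hde : G.IsDismantlingOrdering e) :
    (sub G (e 0)).IsDismantlingOrdering (tailEquiv e) := by
  intro i hi
  have hi' : ((i.succ : Fin (m + 1)) : ℕ) + 1 < m + 1 := by
    simp only [Fin.val_succ]; omega
  obtain ⟨j, hjlt, hjne, hjcond⟩ := hde i.succ hi'
  have hj0 : j ≠ 0 := by
    intro hh
    rw [hh] at hjlt
    exact absurd hjlt (by simp [Fin.lt_def])
  refine ⟨j.pred hj0, ?_, ?_, ?_⟩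
  · have h1 : ((i.succ : Fin (m + 1)) : ℕ) < (j : ℕ) := hjlt
    have h2 : ((i.succ : Fin (m + 1)) : ℕ) = (i : ℕ) + 1 := Fin.val_succ i
    show (i : ℕ) < ((j.pred hj0) : ℕ)
    simp only [Fin.coe_pred]
    omega
  · intro hh
    apply hjne
    have : e ((j.pred hj0).succ) = e i.succ := congrArg Subtype.val hh
    rwa [Fin.succ_pred] at this
  · intro u ⟨mm, hmmle, hmmeq⟩ hadj
    have hcond := hjcond u.1 ⟨mm.succ, ?_, ?_⟩ ?_
    · show G.Adj (e ((j.pred hj0).succ)) u.1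
      rwa [Fin.succ_pred]
    · show ((i.succ : Fin (m + 1)) : ℕ) ≤ (mm.succ : ℕ)
      simp only [Fin.val_succ]
      exact Nat.succ_le_succ hmmle
    · exact congrArg Subtype.val hmmeq
    · exact hadj

theorem dism_to_copwin :
    ∀ (n : ℕ) (V : Type*) [Fintype V] (G : RefGraph V) (e : Fin (n + 1) ≃ V),
      G.IsDismantlingOrdering e → ∃ c₀ : V, ∀ r₀ : V, G.CanCatch n c₀ r₀ := by
  intro n
  induction n with
  | zero =>
    intro V _ G e _
    refine ⟨e 0, fun r₀ => ?_⟩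
    have : e.symm r₀ = (0 : Fin 1) := Fin.ext (by omega)
    show e 0 = r₀
    rw [← this, Equiv.apply_symm_apply]
  | succ n ih =>
    intro V _ G e hde
    obtain ⟨j, hj0, hjne, hjdom⟩ := hde 0 (by simp)
    have hd : Dom G (e 0) (e j) :=
      ⟨Ne.symm hjne, fun u hu =>
        hjdom u ⟨e.symm u, Fin.zero_le _, Equiv.apply_symm_apply e u⟩ hu⟩
    obtain ⟨c₀', hall'⟩ := ih {v : V // v ≠ e 0} (sub G (e 0)) (tailEquiv e)
      (dism_tail G e hde)
    refine ⟨(c₀' : V), fun r₀ => ?_⟩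
    exact lift_catch G hd n c₀' r₀ (hall' (ret G hd r₀))

end CWAux

/-- A graph is cop-win if and only if it has a dismantling
ordering. -/
theorem cop_win_iff_dismantling
    {V : Type*} [Fintype V] [Nonempty V] (G : RefGraph V) :
    G.CopWin ↔ G.HasDismantling := by
  constructor
  · intro hw
    exact CWAux.copwin_to_dism (Fintype.card V) V G rfl hw
  · rintro ⟨e, hde⟩
    obtain ⟨m, hm⟩ : ∃ m, Fintype.card V = m + 1 :=
      ⟨Fintype.card V - 1, by have := Fintype.card_pos (α := V); omega⟩
    obtain ⟨c₀, hall⟩ := CWAux.dism_to_copwin m V G ((finCongr hm.symm).trans e)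
      (CWAux.dism_congr G hm.symm e hde)
    exact ⟨m, c₀, hall⟩
end

section
/- Let G be an r-cop-win graph (r ∈ {0,1}) with finite corner rank α ≥ 2. Then capt(G) ≥ α − r. -/
open Classical

namespace RefGraph

variable {V : Type*} [Fintype V] (G : RefGraph V)

/-! ### Basic level lemmas -/

lemma lvl_succ_subset (t : ℕ) : G.lvl (t + 1) ⊆ G.lvl t := fun _ hv => hv.1

lemma lvl_subset {s t : ℕ} (h : s ≤ t) : G.lvl t ⊆ G.lvl s := by
  induction t with
  | zero =>
    have : s = 0 := Nat.le_zero.mp h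
    subst this; exact fun v hv => hv
  | succ n ih =>
    rcases Nat.lt_or_ge s (n + 1) with h' | h'
    · exact fun v hv => ih (Nat.lt_succ_iff.mp h') (G.lvl_succ_subset n hv)
    · have : s = n + 1 := le_antisymm h h'
      subst this; exact fun v hv => hv

/-! ### Existence of a cornering map into the next level -/

lemma phi_exists {t : ℕ} {c : V} (hc : c ∈ G.lvl t) :
    ∃ d ∈ G.lvl (t + 1), ∀ x ∈ G.lvl t, G.Adj c x → G.Adj d x := by
  classical
  set S := G.lvl t with hS
  let A : Finset V := Finset.univ.filter (fun w => w ∈ S ∧ ∀ x ∈ S, G.Adj c x → G.Adj w x)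
  have hcA : c ∈ A := by
    simp only [A, Finset.mem_filter, Finset.mem_univ, true_and]
    exact ⟨hc, fun x _ h => h⟩
  obtain ⟨d, hdA, hdmax⟩ := A.exists_max_image
      (fun w => (Finset.univ.filter (fun x => x ∈ S ∧ G.Adj w x)).card) ⟨c, hcA⟩
  simp only [A, Finset.mem_filter, Finset.mem_univ, true_and] at hdA
  refine ⟨d, ⟨hdA.1, ?_⟩, hdA.2⟩
  rintro ⟨w, hwS, hdS, hsub, u, huS, hwu, hdu⟩
  have hwA : w ∈ A := by
    simp only [A, Finset.mem_filter, Finset.mem_univ, true_and]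
    exact ⟨hwS, fun x hx hcx => hsub x hx (hdA.2 x hx hcx)⟩
  have hlt : (Finset.univ.filter (fun x => x ∈ S ∧ G.Adj d x)).card
      < (Finset.univ.filter (fun x => x ∈ S ∧ G.Adj w x)).card := by
    apply Finset.card_lt_card
    constructor
    · intro x hx
      simp only [Finset.mem_filter, Finset.mem_univ, true_and] at hx ⊢
      exact ⟨hx.1, hsub x hx.1 hx.2⟩
    · intro hsub2
      have hu : u ∈ Finset.univ.filter (fun x => x ∈ S ∧ G.Adj w x) := by
        simp only [Finset.mem_filter, Finset.mem_univ, true_and]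
        exact ⟨huS, hwu⟩
      have := hsub2 hu
      simp only [Finset.mem_filter, Finset.mem_univ, true_and] at this
      exact hdu this.2
  exact absurd (hdmax w hwA) (not_le.mpr hlt)

noncomputable def phi (t : ℕ) (c : V) : V :=
  if hc : c ∈ G.lvl t then (G.phi_exists hc).choose else c

lemma phi_mem {t : ℕ} {c : V} (hc : c ∈ G.lvl t) : G.phi t c ∈ G.lvl (t + 1) := by
  rw [phi, dif_pos hc]
  exact (G.phi_exists hc).choose_spec.1

lemma phi_corner {t : ℕ} {c : V} (hc : c ∈ G.lvl t) :
    ∀ x ∈ G.lvl t, G.Adj c x → G.Adj (G.phi t c) x := by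
  rw [phi, dif_pos hc]
  exact (G.phi_exists hc).choose_spec.2

lemma phi_adj {t : ℕ} {c c₁ : V} (hc : c ∈ G.lvl t) (hc₁ : c₁ ∈ G.lvl t)
    (h : G.Adj c c₁) : G.Adj (G.phi t c) (G.phi t c₁) := by
  have h1 : G.Adj (G.phi t c) c₁ := G.phi_corner hc c₁ hc₁ h
  have h2 : G.Adj (G.phi t c₁) (G.phi t c) :=
    G.phi_corner hc₁ _ (G.lvl_succ_subset t (G.phi_mem hc)) (G.symm _ _ h1)
  exact G.symm _ _ h2

noncomputable def sig (G : RefGraph V) : ℕ → V → V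
  | 0, v => v
  | t + 1, v => G.phi t (sig G t v)

@[simp] lemma sig_zero (v : V) : G.sig 0 v = v := rfl

lemma sig_succ (t : ℕ) (v : V) : G.sig (t + 1) v = G.phi t (G.sig t v) := rfl

lemma sig_mem (t : ℕ) (v : V) : G.sig t v ∈ G.lvl t := by
  induction t with
  | zero => exact Set.mem_univ v
  | succ n ih => exact G.phi_mem ih

lemma sig_adj {u v : V} (h : G.Adj u v) (t : ℕ) : G.Adj (G.sig t u) (G.sig t v) := by
  induction t with
  | zero => exact h
  | succ n ih => exact G.phi_adj (G.sig_mem n u) (G.sig_mem n v) ih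

/-! ### Corner rank lemmas -/

lemma cr_le_of {v : V} {m : ℕ} (h1 : v ∈ G.lvl m)
    (h2 : G.IsStrictCorner (G.lvl m) v ∨ G.IsCliqueSet (G.lvl m)) :
    G.cr v ≤ (m : ℕ∞) + 1 :=
  sInf_le ⟨m, rfl, h1, h2⟩

lemma le_cr {v : V} {t : ℕ}
    (h : ∀ m : ℕ, v ∈ G.lvl m →
      (G.IsStrictCorner (G.lvl m) v ∨ G.IsCliqueSet (G.lvl m)) → t ≤ m + 1) :
    (t : ℕ∞) ≤ G.cr v := by
  apply le_sInf
  rintro b ⟨m, rfl, h1, h2⟩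
  exact_mod_cast h m h1 h2

lemma cr_le_of_not_mem {v : V} {t : ℕ} (h : v ∉ G.lvl t) : G.cr v ≤ (t : ℕ∞) := by
  induction t with
  | zero => exact absurd (Set.mem_univ v) h
  | succ n ih =>
    by_cases hv : v ∈ G.lvl n
    · have hcorner : G.IsStrictCorner (G.lvl n) v := by
        by_contra hnc
        exact h ⟨hv, hnc⟩
      have h2 := G.cr_le_of hv (Or.inl hcorner)
      calc G.cr v ≤ (n : ℕ∞) + 1 := h2
        _ = ((n + 1 : ℕ) : ℕ∞) := by push_cast; ring
    · calc G.cr v ≤ (n : ℕ∞) := ih hv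
        _ ≤ ((n + 1 : ℕ) : ℕ∞) := by exact_mod_cast Nat.le_succ n

lemma cr_le_alpha {α : ℕ} (hα : G.crGraph = (α : ℕ∞)) (v : V) : G.cr v ≤ (α : ℕ∞) := by
  rw [← hα]
  exact Finset.le_sup (Finset.mem_univ v)

lemma cr_le_of_clique {m : ℕ} (hcl : G.IsCliqueSet (G.lvl m)) (v : V) :
    G.cr v ≤ (m : ℕ∞) + 1 := by
  by_cases hv : v ∈ G.lvl m
  · exact G.cr_le_of hv (Or.inr hcl)
  · exact (G.cr_le_of_not_mem hv).trans le_self_add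

lemma crGraph_le_of_clique {m : ℕ} (hcl : G.IsCliqueSet (G.lvl m)) :
    G.crGraph ≤ (m : ℕ∞) + 1 :=
  Finset.sup_le fun v _ => G.cr_le_of_clique hcl v

lemma le_cr_of_mem {α : ℕ} (hα : G.crGraph = (α : ℕ∞)) {t : ℕ} (ht : t + 1 ≤ α)
    {v : V} (hv : v ∈ G.lvl t) : ((t + 1 : ℕ) : ℕ∞) ≤ G.cr v := by
  apply G.le_cr
  intro m h1 h2
  by_contra hlt
  push_neg at hlt
  have hmt : m + 1 ≤ t := by omega
  rcases h2 with hc | hcl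
  · exact (G.lvl_subset hmt hv).2 hc
  · have h3 := G.crGraph_le_of_clique hcl
    rw [hα] at h3
    have h4 : (α : ℕ) ≤ m + 1 := by exact_mod_cast h3
    omega

lemma mem_lvl_of_le_cr {t : ℕ} {v : V} (h : ((t + 1 : ℕ) : ℕ∞) ≤ G.cr v) :
    v ∈ G.lvl t := by
  by_contra hv
  have h1 := G.cr_le_of_not_mem hv
  have h2 : ((t + 1 : ℕ) : ℕ∞) ≤ (t : ℕ∞) := h.trans h1
  have h3 : (t + 1 : ℕ) ≤ (t : ℕ) := by exact_mod_cast h2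
  omega

lemma clique_top {α : ℕ} [Nonempty V] (hα : G.crGraph = (α : ℕ∞)) (hα2 : 2 ≤ α) :
    G.IsCliqueSet (G.lvl (α - 1)) := by
  by_contra hnc
  obtain ⟨v⟩ := ‹Nonempty V›
  have hdm : G.sig α v ∈ G.lvl α := G.sig_mem α v
  have h1 : G.cr (G.sig α v) ≤ (α : ℕ∞) := G.cr_le_alpha hα _
  have h2 : ((α + 1 : ℕ) : ℕ∞) ≤ G.cr (G.sig α v) := by
    apply G.le_cr
    intro m hm1 hm2
    by_contra hlt
    push_neg at hlt
    have hmα : m + 1 ≤ α := by omega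
    rcases hm2 with hc | hcl
    · exact (G.lvl_subset hmα hdm).2 hc
    · by_cases hm : m = α - 1
      · subst hm; exact hnc hcl
      · have h3 := G.crGraph_le_of_clique hcl
        rw [hα] at h3
        have h4 : (α : ℕ) ≤ m + 1 := by exact_mod_cast h3
        omega
  have h5 : ((α + 1 : ℕ) : ℕ∞) ≤ (α : ℕ∞) := h2.trans h1
  have h6 : (α + 1 : ℕ) ≤ (α : ℕ) := by exact_mod_cast h5
  omega

/-! ### Adjacency-avoidance predicate -/

def AAS (G : RefGraph V) (S : Set V) : ℕ → V → V → Prop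
  | 0, c, r => c ∈ S ∧ r ∈ S ∧ ¬ G.Adj c r
  | m + 1, c, r => c ∈ S ∧ r ∈ S ∧ ¬ G.Adj c r ∧
      ∀ c₁ ∈ S, G.Adj c c₁ → ∃ r₁ ∈ S, G.Adj r r₁ ∧ AAS G S m c₁ r₁

lemma canCatch_succ : ∀ (n : ℕ) {c r : V}, G.CanCatch n c r → G.CanCatch (n + 1) c r := by
  intro n
  induction n with
  | zero =>
    intro c r h
    exact Or.inl h
  | succ n ih =>
    intro c r h
    rcases h with h | ⟨c', h1, h2⟩
    · exact Or.inl h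
    · refine Or.inr ⟨c', h1, ?_⟩
      rcases h2 with h2 | h2
      · exact Or.inl h2
      · exact Or.inr fun r' hr' => ih (h2 r' hr')

lemma canCatch_mono {n m : ℕ} {c r : V} (h : n ≤ m) (hc : G.CanCatch n c r) :
    G.CanCatch m c r := by
  induction m with
  | zero =>
    have : n = 0 := Nat.le_zero.mp h
    subst this; exact hc
  | succ m ih =>
    rcases Nat.lt_or_ge n (m + 1) with h' | h'
    · exact G.canCatch_succ m (ih (by omega))
    · have : n = m + 1 := by omega
      subst this; exact hc

lemma AAS_not_canCatch : ∀ (m : ℕ) (c r : V), G.AAS (G.lvl 0) m c r →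
    ¬ G.CanCatch (m + 1) c r := by
  intro m
  induction m with
  | zero =>
    rintro c r ⟨-, -, hna⟩ hcc
    rcases hcc with h | ⟨c', h1, h2⟩
    · exact hna (h ▸ G.refl c)
    · rcases h2 with h2 | h2
      · exact hna (h2 ▸ h1)
      · have h3 : c' = r := h2 r (G.refl r)
        exact hna (h3 ▸ h1)
  | succ m ih =>
    rintro c r ⟨-, -, hna, hstep⟩ hcc
    rcases hcc with h | ⟨c₁, h1, h2⟩
    · exact hna (h ▸ G.refl c)
    · rcases h2 with h2 | h2
      · exact hna (h2 ▸ h1)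
      · obtain ⟨r₁, -, hrr₁, haas⟩ := hstep c₁ (Set.mem_univ c₁) h1
        exact ih c₁ r₁ haas (h2 r₁ hrr₁)

lemma AAS_lift (t : ℕ) : ∀ (m : ℕ) {c r : V}, c ∈ G.lvl t →
    G.AAS (G.lvl (t + 1)) m (G.phi t c) r → G.AAS (G.lvl t) (m + 1) c r := by
  intro m
  induction m with
  | zero =>
    intro c r hc h
    obtain ⟨-, hr, hna'⟩ := h
    have hrt : r ∈ G.lvl t := G.lvl_succ_subset t hr
    have hna : ¬ G.Adj c r := fun h' => hna' (G.phi_corner hc r hrt h')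
    refine ⟨hc, hrt, hna, ?_⟩
    intro c₁ hc₁ hcc₁
    by_cases hsub : ∀ u ∈ G.lvl t, G.Adj r u → G.Adj c₁ u
    · exfalso
      have hnex : ¬ ∃ u ∈ G.lvl t, G.Adj c₁ u ∧ ¬ G.Adj r u := by
        intro hex
        exact hr.2 ⟨c₁, hc₁, hrt, hsub, hex⟩
      exact hnex ⟨c, hc, G.symm _ _ hcc₁, fun h' => hna (G.symm _ _ h')⟩
    · push_neg at hsub
      obtain ⟨u, huS, hru, hnc₁u⟩ := hsub
      exact ⟨u, huS, hru, hc₁, huS, hnc₁u⟩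
  | succ m ih =>
    intro c r hc h
    obtain ⟨-, hr, hna', hstep⟩ := h
    have hrt : r ∈ G.lvl t := G.lvl_succ_subset t hr
    have hna : ¬ G.Adj c r := fun h' => hna' (G.phi_corner hc r hrt h')
    refine ⟨hc, hrt, hna, ?_⟩
    intro c₁ hc₁ hcc₁
    obtain ⟨r₁, hr₁S, hrr₁, hinner⟩ :=
      hstep (G.phi t c₁) (G.phi_mem hc₁) (G.phi_adj hc hc₁ hcc₁)
    exact ⟨r₁, G.lvl_succ_subset t hr₁S, hrr₁, ih hc₁ hinner⟩

lemma AAS_descend : ∀ (t m : ℕ) (c r : V),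
    G.AAS (G.lvl t) m (G.sig t c) r → G.AAS (G.lvl 0) (m + t) c r := by
  intro t
  induction t with
  | zero =>
    intro m c r h
    exact h
  | succ t ih =>
    intro m c r h
    have h1 : G.AAS (G.lvl t) (m + 1) (G.sig t c) r :=
      G.AAS_lift t m (G.sig_mem t c) (by rw [← G.sig_succ]; exact h)
    have h2 := ih (m + 1) c r h1
    have e : m + (t + 1) = (m + 1) + t := by omega
    rw [e]; exact h2

/-! ### The cop strategy (upper bound, for nonemptiness of the capture set) -/

lemma catch_aux : ∀ (j : ℕ) (p r : V), G.Adj p (G.sig j r) → G.CanCatch (j + 1) p r := by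
  intro j
  induction j with
  | zero =>
    intro p r h
    exact Or.inr ⟨r, h, Or.inl rfl⟩
  | succ j ih =>
    intro p r h
    refine Or.inr ⟨G.sig (j + 1) r, h, Or.inr fun r₁ hr₁ => ih _ r₁ ?_⟩
    rw [G.sig_succ]
    exact G.phi_corner (G.sig_mem j r) _ (G.sig_mem j r₁) (G.sig_adj hr₁ j)

lemma exists_catch {α : ℕ} [Nonempty V] (hα : G.crGraph = (α : ℕ∞)) (hα2 : 2 ≤ α) :
    ∃ c₀ : V, ∀ r₀ : V, G.CanCatch α c₀ r₀ := by
  obtain ⟨v⟩ := ‹Nonempty V›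
  refine ⟨G.sig (α - 1) v, fun r₀ => ?_⟩
  have h := G.clique_top hα hα2 _ (G.sig_mem (α - 1) v) _ (G.sig_mem (α - 1) r₀)
  have h2 := G.catch_aux (α - 1) _ r₀ h
  have e : α - 1 + 1 = α := by omega
  rwa [e] at h2

/-! ### Dominator lemmas -/

lemma ocw_of_dominator {β : ℕ} (hα : G.crGraph = ((β + 2 : ℕ) : ℕ∞)) {x : V}
    (hx : x ∈ G.lvl β) (hdom : ∀ u ∈ G.lvl β, G.Adj x u) : G.OneCopWin (β + 2) := by
  have hx1 : x ∈ G.lvl (β + 1) := by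
    refine ⟨hx, ?_⟩
    rintro ⟨w, hw, hx', hsub, u, huS, hwu, hxu⟩
    exact hxu (hdom u huS)
  have hcrx : G.cr x = ((β + 2 : ℕ) : ℕ∞) := by
    apply le_antisymm (G.cr_le_alpha hα x)
    exact G.le_cr_of_mem hα (by omega) hx1
  refine ⟨x, hcrx, fun u hu => hdom u (G.mem_lvl_of_le_cr ?_)⟩
  have e : β + 2 - 1 = β + 1 := by omega
  rw [e] at hu
  exact hu

lemma no_dominator_deep {γ : ℕ} (hα : G.crGraph = ((γ + 3 : ℕ) : ℕ∞)) {x : V}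
    (hx : x ∈ G.lvl γ) (hdom : ∀ u ∈ G.lvl γ, G.Adj x u) : False := by
  have hdom' : ∀ u ∈ G.lvl (γ + 1), ∀ y ∈ G.lvl γ, G.Adj u y := by
    intro u hu y hy
    by_contra hne
    exact hu.2 ⟨x, hx, hu.1, fun z hz _ => hdom z hz, y, hy, hdom y hy, hne⟩
  have hcl : G.IsCliqueSet (G.lvl (γ + 1)) := fun u hu v hv =>
    hdom' u hu v (G.lvl_succ_subset γ hv)
  have h1 := G.crGraph_le_of_clique hcl
  rw [hα] at h1
  have h2 : (γ + 3 : ℕ) ≤ γ + 1 + 1 := by exact_mod_cast h1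
  omega

end RefGraph

/-- If `G` is an `r`-cop-win graph (`r ∈ {0,1}`) with finite
corner rank `α ≥ 2`, then `capt(G) ≥ α - r`. -/
theorem capture_time_lower_bound
    {V : Type*} [Fintype V] [Nonempty V] (G : RefGraph V)
    (α r : ℕ) (hα2 : 2 ≤ α) (hα : G.crGraph = (α : ℕ∞))
    (hr : G.RCopWin r α) :
    α - r ≤ G.capt := by
  classical
  have hne : {n : ℕ | ∃ c₀ : V, ∀ r₀ : V, G.CanCatch n c₀ r₀}.Nonempty :=
    ⟨α, G.exists_catch hα hα2⟩
  show α - r ≤ sInf {n : ℕ | ∃ c₀ : V, ∀ r₀ : V, G.CanCatch n c₀ r₀}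
  apply le_csInf hne
  rintro n ⟨c₀, hc₀⟩
  rcases hr with ⟨rfl, hocw⟩ | ⟨rfl, hocw⟩
  · -- r = 1, OneCopWin
    rcases Nat.lt_or_ge α 3 with h3 | h3
    · -- α = 2
      have hα2' : α = 2 := by omega
      subst hα2'
      by_contra hlt
      push_neg at hlt
      have hn0 : n = 0 := by omega
      subst hn0
      have hcl : G.IsCliqueSet (G.lvl 0) := by
        intro u _ v _
        have h1 : c₀ = u := hc₀ u
        have h2 : c₀ = v := hc₀ v
        rw [← h1, ← h2]
        exact G.refl c₀
      have h4 := G.crGraph_le_of_clique hcl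
      rw [hα] at h4
      have h5 : (2 : ℕ) ≤ 0 + 1 := by exact_mod_cast h4
      omega
    · -- α ≥ 3
      obtain ⟨γ, rfl⟩ : ∃ γ, α = γ + 3 := ⟨α - 3, by omega⟩
      have hnd : ∃ r₀ ∈ G.lvl γ, ¬ G.Adj (G.sig γ c₀) r₀ := by
        by_contra h
        push_neg at h
        exact G.no_dominator_deep hα (G.sig_mem γ c₀) fun u hu => h u hu
      obtain ⟨r₀, hr₀, hna⟩ := hnd
      have h0 : G.AAS (G.lvl γ) 0 (G.sig γ c₀) r₀ := ⟨G.sig_mem γ c₀, hr₀, hna⟩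
      have h1 := G.AAS_descend γ 0 c₀ r₀ h0
      have h2 : ¬ G.CanCatch (0 + γ + 1) c₀ r₀ := G.AAS_not_canCatch (0 + γ) c₀ r₀ h1
      by_contra hlt
      push_neg at hlt
      exact h2 (G.canCatch_mono (by omega) (hc₀ r₀))
  · -- r = 0, ¬ OneCopWin
    obtain ⟨β, rfl⟩ : ∃ β, α = β + 2 := ⟨α - 2, by omega⟩
    have hnd : ∃ r₀ ∈ G.lvl β, ¬ G.Adj (G.sig β c₀) r₀ := by
      by_contra h
      push_neg at h
      exact hocw (G.ocw_of_dominator hα (G.sig_mem β c₀) fun u hu => h u hu)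
    obtain ⟨r₀, hr₀, hna⟩ := hnd
    have h0 : G.AAS (G.lvl β) 0 (G.sig β c₀) r₀ := ⟨G.sig_mem β c₀, hr₀, hna⟩
    have h1 := G.AAS_descend β 0 c₀ r₀ h0
    have h2 : ¬ G.CanCatch (0 + β + 1) c₀ r₀ := G.AAS_not_canCatch (0 + β) c₀ r₀ h1
    by_contra hlt
    push_neg at hlt
    exact h2 (G.canCatch_mono (by omega) (hc₀ r₀))
end

section
/- Suppose a graph G has a dismantling ordering (v₁, …, vₙ) and there are indices j, k with 1 < j < k such that vₖ corners v_j in the subgraph of G induced by {v_{j−1}, v_j, …, vₙ}. Then the ordering obtained from (v₁, …, vₙ) by swapping the positions of v_{j−1} and v_j (leaving all other vertices in place) is also a dismantling ordering of G. -/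
open Classical

/-- If `(v₁, …, vₙ)` is a dismantling ordering of `G` and there
are indices `1 < j < k` (here `i` is the position of `v_{j-1}`, so `i + 1 = j`)
such that `vₖ` corners `v_j` in the subgraph induced by `{v_{j-1}, v_j, …, vₙ}`,
then swapping `v_{j-1}` and `v_j` again yields a dismantling ordering of `G`. -/
theorem dismantling_ordering_swap
    {V : Type*} [Fintype V] [Nonempty V] (G : RefGraph V)
    {n : ℕ} (e : Fin n ≃ V) (hd : G.IsDismantlingOrdering e)
    (i j k : Fin n) (hij : (i : ℕ) + 1 = (j : ℕ)) (hjk : j < k)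
    (hne : e k ≠ e j)
    (hcorn : ∀ u : V, (∃ m : Fin n, i ≤ m ∧ e m = u) → G.Adj (e j) u → G.Adj (e k) u) :
    G.IsDismantlingOrdering ((Equiv.swap i j).trans e) := by
  have hijlt : i < j := by rw [Fin.lt_def]; omega
  have hik : i < k := lt_trans hijlt hjk
  have hσi : Equiv.swap i j i = j := Equiv.swap_apply_left i j
  have hσj : Equiv.swap i j j = i := Equiv.swap_apply_right i j
  have hσk : Equiv.swap i j k = k :=
    Equiv.swap_apply_of_ne_of_ne (ne_of_gt hik) (ne_of_gt hjk)
  intro p hp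
  simp only [Equiv.trans_apply]
  by_cases hpi : p = i
  · rw [hpi, hσi]
    refine ⟨k, hik, ?_, ?_⟩
    · rw [hσk]; exact hne
    · rw [hσk]
      intro u hu hadj
      apply hcorn u ?_ hadj
      obtain ⟨m, hm, hem⟩ := hu
      refine ⟨Equiv.swap i j m, ?_, hem⟩
      rcases eq_or_ne m i with rfl | hmi
      · rw [hσi]; exact le_of_lt hijlt
      rcases eq_or_ne m j with rfl | hmj
      · rw [hσj]
      · rw [Equiv.swap_apply_of_ne_of_ne hmi hmj]; exact hm
  by_cases hpj : p = j
  · rw [hpj, hσj]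
    have hi1 : (i : ℕ) + 1 < n := by have := j.isLt; omega
    obtain ⟨q, hiq, hqne, hq⟩ := hd i hi1
    have hmem : ∀ u, (∃ m, j ≤ m ∧ e (Equiv.swap i j m) = u) →
        (∃ m, i ≤ m ∧ e m = u) := by
      rintro u ⟨m, hm, hem⟩
      refine ⟨Equiv.swap i j m, ?_, hem⟩
      rcases eq_or_ne m i with rfl | hmi
      · exact absurd hm (not_le.2 hijlt)
      rcases eq_or_ne m j with rfl | hmj
      · rw [hσj]
      · rw [Equiv.swap_apply_of_ne_of_ne hmi hmj]
        exact le_trans (le_of_lt hijlt) hm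
    rcases eq_or_ne q j with rfl | hqj
    · refine ⟨k, hjk, ?_, ?_⟩
      · rw [hσk]
        exact fun h => (ne_of_lt hik).symm (e.injective h)
      · rw [hσk]
        intro u hu hadj
        exact hcorn u (hmem u hu) (hq u (hmem u hu) hadj)
    · have hjq : j < q := by
        rw [Fin.lt_def]
        have h1 : (i : ℕ) < q := hiq
        have h2 : (q : ℕ) ≠ j := Fin.val_ne_of_ne hqj
        omega
      refine ⟨q, hjq, ?_, ?_⟩
      · rw [Equiv.swap_apply_of_ne_of_ne (ne_of_gt hiq) hqj]
        exact hqne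
      · rw [Equiv.swap_apply_of_ne_of_ne (ne_of_gt hiq) hqj]
        intro u hu hadj
        exact hq u (hmem u hu) hadj
  · -- p ∉ {i, j}
    have hpi' : (p : ℕ) ≠ i := Fin.val_ne_of_ne hpi
    have hpj' : (p : ℕ) ≠ j := Fin.val_ne_of_ne hpj
    have hσp : Equiv.swap i j p = p := Equiv.swap_apply_of_ne_of_ne hpi hpj
    have hmono : ∀ m : Fin n, p ≤ m → p ≤ Equiv.swap i j m := by
      intro m hm
      rcases eq_or_ne m i with hmi | hmi
      · rw [hmi, hσi, Fin.le_def]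
        have h1 : (p : ℕ) ≤ i := by rw [← hmi]; exact hm
        omega
      rcases eq_or_ne m j with hmj | hmj
      · rw [hmj, hσj, Fin.le_def]
        omega
      · rw [Equiv.swap_apply_of_ne_of_ne hmi hmj]; exact hm
    obtain ⟨q, hpq, hqne, hq⟩ := hd p hp
    have hpq' : p < Equiv.swap i j q := by
      rcases eq_or_ne q i with hqi | hqi
      · rw [hqi, hσi, Fin.lt_def]
        have h1 : (p : ℕ) < i := by
          have h2 : (p : ℕ) < q := hpq
          rw [hqi] at h2; omega
        omega
      rcases eq_or_ne q j with hqj | hqj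
      · rw [hqj, hσj, Fin.lt_def]
        have h1 : (p : ℕ) < j := by
          have h2 : (p : ℕ) < q := hpq
          rw [hqj] at h2; omega
        omega
      · rw [Equiv.swap_apply_of_ne_of_ne hqi hqj]; exact hpq
    refine ⟨Equiv.swap i j q, hpq', ?_, ?_⟩
    · rw [Equiv.swap_apply_self, hσp]; exact hqne
    · rw [Equiv.swap_apply_self, hσp]
      intro u hu hadj
      obtain ⟨m, hm, hem⟩ := hu
      exact hq u ⟨Equiv.swap i j m, hmono m hm, hem⟩ hadj
end

section
/- If a graph has a dismantling ordering, then it has a dismantling ordering in which every vertex of corner rank 1 appears before every vertex of corner rank greater than 1. -/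
open Classical

/-!
Every strict corner `a` of `G` is cornered by a vertex that is not a strict corner: among the
vertices whose closed neighbourhood contains `N[a]`, take one with the largest neighbourhood.
Deleting a cornered vertex from a dismantlable graph leaves a dismantlable graph (if `a` and the
deleted vertex are twins, exchange them), so `G` minus its strict corners is dismantlable.
Listing the strict corners first, each cornered in `G` by a vertex that survives, followed by a
dismantling ordering of the rest, gives the required ordering: the vertices of corner rank `1`
are exactly the strict corners, unless `G` is a clique, in which case no vertex has larger rank.
-/

open Equiv

theorem List.Nodup.map_swap_perm {α : Type*} [DecidableEq α] {l : List α} (hl : l.Nodup)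
    {a v : α} (ha : a ∉ l) (hv : v ∈ l) : (l.map (Equiv.swap a v)).Perm (a :: l.erase v) := by
  have hfix : (l.erase v).map (Equiv.swap a v) = l.erase v := by
    refine List.map_congr_left (fun x hx => ?_) |>.trans (List.map_id _)
    obtain ⟨hxv, hxl⟩ := hl.mem_erase_iff.1 hx
    exact swap_apply_of_ne_of_ne (ne_of_mem_of_not_mem hxl ha) hxv
  simpa [hfix] using (List.perm_cons_erase hv).map (Equiv.swap a v)

theorem List.exists_equiv_ofFn_eq {α : Type*} [Fintype α] {l : List α} (hnd : l.Nodup)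
    (hmem : ∀ x, x ∈ l) : ∃ e : Fin (Fintype.card α) ≃ α, List.ofFn e = l := by
  have hlen : l.length = Fintype.card α := by
    simpa using Fintype.card_congr (hnd.getEquivOfForallMemList l hmem)
  refine ⟨(finCongr hlen.symm).trans (hnd.getEquivOfForallMemList l hmem), ?_⟩
  exact List.ext_getElem (by simp [hlen]) fun i _ _ => by simp

theorem List.lt_of_getElem_append {α : Type*} {l₁ l₂ : List α} {p : α → Prop}
    (h₁ : ∀ x ∈ l₁, p x) (h₂ : ∀ x ∈ l₂, ¬ p x) {i j : ℕ} (hi : i < (l₁ ++ l₂).length)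
    (hj : j < (l₁ ++ l₂).length) (hpi : p (l₁ ++ l₂)[i]) (hpj : ¬ p (l₁ ++ l₂)[j]) : i < j := by
  have hi₁ : i < l₁.length := by
    by_contra! h
    rw [List.getElem_append_right h] at hpi
    exact h₂ _ (List.getElem_mem _) hpi
  have hj₁ : l₁.length ≤ j := by
    by_contra! h
    rw [List.getElem_append_left h] at hpj
    exact hpj (h₁ _ (List.getElem_mem _))
  omega

namespace RefGraph

variable {V : Type*} {G : RefGraph V}

theorem adj_comm {u v : V} : G.Adj u v ↔ G.Adj v u := ⟨G.symm u v, G.symm v u⟩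

theorem adj_swap_iff_of_twins {s : Set V} {a v : V} (ha : a ∈ s) (hv : v ∈ s)
    (htwin : ∀ u ∈ s, G.Adj a u ↔ G.Adj v u) {x y : V} (hx : x ∈ s) (hy : y ∈ s) :
    G.Adj (swap a v x) (swap a v y) ↔ G.Adj x y := by
  have swap_left : ∀ x, ∀ y ∈ s, G.Adj (swap a v x) y ↔ G.Adj x y := by
    intro x y hy
    rcases eq_or_ne x a with rfl | hxa
    · rw [swap_apply_left, htwin y hy]
    rcases eq_or_ne x v with rfl | hxv
    · rw [swap_apply_right, htwin y hy]
    · rw [swap_apply_of_ne_of_ne hxa hxv]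
  have hsy : swap a v y ∈ s := by
    rw [swap_apply_def]; split_ifs <;> assumption
  rw [swap_left x _ hsy, adj_comm, swap_left y x hx, adj_comm]

def IsDismantlingList (G : RefGraph V) : List V → Prop
  | [] => True
  | a :: t => (t ≠ [] → ∃ b ∈ t, b ≠ a ∧ ∀ u ∈ a :: t, G.Adj a u → G.Adj b u) ∧
      G.IsDismantlingList t

theorem isDismantlingList_ofFn {n : ℕ} (f : Fin n → V) :
    G.IsDismantlingList (List.ofFn f) ↔ ∀ i : Fin n, (i : ℕ) + 1 < n → ∃ j, i < j ∧ f j ≠ f i ∧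
      ∀ u, (∃ m, i ≤ m ∧ f m = u) → G.Adj (f i) u → G.Adj (f j) u := by
  induction n with
  | zero => simp [IsDismantlingList]
  | succ n ih =>
    rw [List.ofFn_succ, IsDismantlingList, ih, Fin.forall_fin_succ]
    congr! 1
    · simp [List.ofFn_eq_nil_iff, Fin.exists_fin_succ, Fin.pos_iff_ne_zero, Nat.pos_iff_ne_zero,
        or_imp, forall_and, forall_exists_index, G.refl]
    · simp [Fin.exists_fin_succ, Fin.succ_lt_succ_iff, Fin.succ_le_succ_iff]

theorem IsDismantlingList.map {W : Type*} {H : RefGraph W} {f : V → W}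
    (hf : Function.Injective f) {l : List V}
    (hadj : ∀ x ∈ l, ∀ y ∈ l, H.Adj (f x) (f y) ↔ G.Adj x y) (hl : G.IsDismantlingList l) :
    H.IsDismantlingList (l.map f) := by
  induction l with
  | nil => trivial
  | cons a t ih =>
    obtain ⟨hcorner, ht⟩ := hl
    refine ⟨fun hne => ?_, ih (fun x hx y hy => hadj x (.tail a hx) y (.tail a hy)) ht⟩
    obtain ⟨b, hbt, hba, hb⟩ := hcorner (by simpa using hne)
    refine ⟨f b, List.mem_map_of_mem hbt, hf.ne hba, ?_⟩
    simp only [← List.map_cons, List.forall_mem_map]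
    intro u hu hau
    exact (hadj b (.tail a hbt) u hu).2 (hb u hu ((hadj a (.head t) u hu).1 hau))

theorem IsDismantlingList.exists_perm_erase_of_twins {a v : V} {t : List V}
    (ht : G.IsDismantlingList t) (hnd : (a :: t).Nodup) (hv : v ∈ t)
    (htwin : ∀ u ∈ a :: t, G.Adj a u ↔ G.Adj v u) :
    ∃ l, l.Perm ((a :: t).erase v) ∧ G.IsDismantlingList l := by
  obtain ⟨hat, htnd⟩ := List.nodup_cons.1 hnd
  have hva : v ≠ a := ne_of_mem_of_not_mem hv hat
  refine ⟨t.map (swap a v), ?_, ht.map (swap a v).injective fun x hx y hy => ?_⟩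
  · rw [List.erase_cons_tail (by simpa using hva.symm)]
    exact List.Nodup.map_swap_perm htnd hat hv
  · exact adj_swap_iff_of_twins (s := {u | u ∈ a :: t}) (.head t) (.tail a hv) htwin
      (.tail a hx) (.tail a hy)

theorem IsDismantlingList.exists_perm_erase {l : List V} (hl : G.IsDismantlingList l)
    (hnd : l.Nodup) {v w : V} (hv : v ∈ l) (hw : w ∈ l) (hwv : w ≠ v)
    (hdom : ∀ u ∈ l, G.Adj v u → G.Adj w u) :
    ∃ l', l'.Perm (l.erase v) ∧ G.IsDismantlingList l' := by
  induction l generalizing w with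
  | nil => simp at hw
  | cons a t ih =>
    obtain ⟨hcorner, ht⟩ := hl
    obtain ⟨hat, htnd⟩ := List.nodup_cons.1 hnd
    rcases eq_or_ne v a with rfl | hva
    · exact ⟨t, by rw [List.erase_cons_head], ht⟩
    have hvt : v ∈ t := (List.mem_cons.1 hv).resolve_left hva
    obtain ⟨b, hbt, hba, hb⟩ := hcorner (List.ne_nil_of_mem hvt)
    by_cases htwins : w = a ∧ b = v
    · obtain ⟨rfl, rfl⟩ := htwins
      exact ht.exists_perm_erase_of_twins hnd hvt fun u hu => ⟨hb u hu, hdom u hu⟩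
    -- Otherwise `t` contains a corner `w'` of `v`, and a corner `b'` of `a` other than `v`.
    obtain ⟨w', hw't, hw'v, hw'⟩ : ∃ w' ∈ t, w' ≠ v ∧ ∀ u ∈ a :: t, G.Adj v u → G.Adj w' u := by
      rcases eq_or_ne w a with rfl | hwa
      · exact ⟨b, hbt, fun hbv => htwins ⟨rfl, hbv⟩, fun u hu h => hb u hu (hdom u hu h)⟩
      · exact ⟨w, (List.mem_cons.1 hw).resolve_left hwa, hwv, hdom⟩
    obtain ⟨b', hb't, hb'v, hb'⟩ : ∃ b' ∈ t, b' ≠ v ∧ ∀ u ∈ a :: t, G.Adj a u → G.Adj b' u := by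
      rcases eq_or_ne b v with rfl | hbv
      · exact ⟨w', hw't, hw'v, fun u hu h => hw' u hu (hb u hu h)⟩
      · exact ⟨b, hbt, hbv, hb⟩
    obtain ⟨l₂, hperm, hl₂⟩ := ih ht htnd hvt hw't hw'v fun u hu => hw' u (.tail a hu)
    have hb'l₂ : b' ∈ l₂ := hperm.mem_iff.2 (htnd.mem_erase_iff.2 ⟨hb'v, hb't⟩)
    have hsub : a :: l₂ ⊆ a :: t :=
      List.Subset.trans (hperm.cons a).subset (List.cons_subset_cons a List.erase_subset)
    refine ⟨a :: l₂, ?_, fun _ => ⟨b', hb'l₂, ne_of_mem_of_not_mem hb't hat,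
      fun u hu => hb' u (hsub hu)⟩, hl₂⟩
    rw [List.erase_cons_tail (by simpa using hva.symm)]
    exact hperm.cons a

theorem IsDismantlingList.append {l₁ l₂ : List V} (h₂ : G.IsDismantlingList l₂)
    (h₁ : ∀ a ∈ l₁, ∃ b ∈ l₂, b ≠ a ∧ ∀ u ∈ l₁ ++ l₂, G.Adj a u → G.Adj b u) :
    G.IsDismantlingList (l₁ ++ l₂) := by
  induction l₁ with
  | nil => exact h₂
  | cons a t ih =>
    refine ⟨fun _ => ?_, ih fun x hx => ?_⟩
    · obtain ⟨b, hb, hba, hdom⟩ := h₁ a (.head t)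
      exact ⟨b, List.mem_append_right t hb, hba, hdom⟩
    · obtain ⟨b, hb, hbx, hdom⟩ := h₁ x (.tail a hx)
      exact ⟨b, hb, hbx, fun u hu => hdom u (.tail a hu)⟩

def IsDismantlable (G : RefGraph V) (S : Finset V) : Prop :=
  ∃ l : List V, (l : Multiset V) = S.val ∧ G.IsDismantlingList l

theorem IsDismantlable.erase {S : Finset V} (hS : G.IsDismantlable S) {v w : V} (hw : w ∈ S)
    (hwv : w ≠ v) (hdom : ∀ u ∈ S, G.Adj v u → G.Adj w u) : G.IsDismantlable (S.erase v) := by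
  by_cases hv : v ∈ S
  · obtain ⟨l, hlS, hl⟩ := hS
    have hmem : ∀ x, x ∈ l ↔ x ∈ S := fun x => by rw [← Multiset.mem_coe, hlS, Finset.mem_val]
    have hnd : l.Nodup := Multiset.coe_nodup.1 (hlS ▸ S.nodup)
    obtain ⟨l', hperm, hl'⟩ := hl.exists_perm_erase hnd ((hmem v).2 hv) ((hmem w).2 hw) hwv
      fun u hu => hdom u ((hmem u).1 hu)
    refine ⟨l', ?_, hl'⟩
    rw [Finset.erase_val, ← hlS, Multiset.coe_erase, Multiset.coe_eq_coe]
    exact hperm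
  · rwa [Finset.erase_eq_of_notMem hv]

theorem IsDismantlable.sdiff {S : Finset V} (hS : G.IsDismantlable S) (A : Finset V)
    (hA : ∀ a ∈ A, ∃ w ∈ S \ A, ∀ u ∈ S, G.Adj a u → G.Adj w u) :
    G.IsDismantlable (S \ A) := by
  induction A using Finset.induction_on with
  | empty => simpa using hS
  | insert a A _ ih =>
    have hsub : S \ insert a A ⊆ S \ A :=
      Finset.sdiff_subset_sdiff le_rfl (Finset.subset_insert a A)
    obtain ⟨w, hw, hdom⟩ := hA a (Finset.mem_insert_self a A)
    rw [Finset.sdiff_insert]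
    refine (ih fun x hx => ?_).erase (hsub hw) ?_ fun u hu => hdom u (Finset.mem_sdiff.1 hu).1
    · obtain ⟨w', hw', hdom'⟩ := hA x (Finset.mem_insert_of_mem hx)
      exact ⟨w', hsub hw', hdom'⟩
    · rintro rfl
      exact (Finset.mem_sdiff.1 hw).2 (Finset.mem_insert_self _ A)

theorem cr_le_one_iff {v : V} :
    G.cr v ≤ 1 ↔ G.IsStrictCorner Set.univ v ∨ G.IsCliqueSet Set.univ := by
  refine ⟨fun h => ?_, fun h => sInf_le ⟨0, by simp, Set.mem_univ v, h⟩⟩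
  have hlt : G.cr v < 2 := h.trans_lt (by norm_num)
  rw [cr, sInf_lt_iff] at hlt
  obtain ⟨_, ⟨m, rfl, -, hm⟩, hlt⟩ := hlt
  obtain rfl : m = 0 := by norm_cast at hlt; omega
  exact hm

section Fintype

variable [Fintype V]

theorem exists_corners_not_isStrictCorner (v : V) :
    ∃ w, (∀ u, G.Adj v u → G.Adj w u) ∧ ¬ G.IsStrictCorner Set.univ w := by
  obtain ⟨w, hw, hmax⟩ := Finset.exists_max_image
    (Finset.univ.filter fun w => ∀ u, G.Adj v u → G.Adj w u)
    (fun w => (Finset.univ.filter (G.Adj w)).card) ⟨v, by simp⟩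
  simp only [Finset.mem_filter, Finset.mem_univ, true_and] at hw hmax
  refine ⟨w, hw, ?_⟩
  rintro ⟨w', -, -, hdom, u, -, hw'u, hwu⟩
  have hsub : Finset.univ.filter (G.Adj w) ⊂ Finset.univ.filter (G.Adj w') :=
    (Finset.ssubset_iff_of_subset fun x hx => by simpa using hdom x trivial (by simpa using hx)).2
      ⟨u, by simpa using hw'u, by simpa using hwu⟩
  exact (hmax w' fun x hx => hdom x trivial (hw x hx)).not_gt (Finset.card_lt_card hsub)

theorem HasDismantling.isDismantlable_univ (hd : G.HasDismantling) :
    G.IsDismantlable Finset.univ := by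
  obtain ⟨e, he⟩ := hd
  refine ⟨List.ofFn e, ?_, (isDismantlingList_ofFn e).2 he⟩
  refine (Multiset.Nodup.ext (Multiset.coe_nodup.2 (List.nodup_ofFn.2 e.injective))
    Finset.univ.nodup).2 fun x => ?_
  simpa using ⟨e.symm x, e.apply_symm_apply x⟩

theorem IsDismantlable.exists_isDismantlingOrdering_prepend {A : Finset V}
    (hB : G.IsDismantlable (Finset.univ \ A))
    (hA : ∀ a ∈ A, ∃ w ∉ A, ∀ u, G.Adj a u → G.Adj w u) :
    ∃ e : Fin (Fintype.card V) ≃ V, G.IsDismantlingOrdering e ∧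
      ∀ p q, e p ∈ A → e q ∉ A → p < q := by
  obtain ⟨lB, hlB, hB⟩ := hB
  have hmemB (x : V) : x ∈ lB ↔ x ∉ A := by
    rw [← Multiset.mem_coe, hlB, Finset.mem_val, Finset.mem_sdiff]
    exact and_iff_right (Finset.mem_univ x)
  have hL : G.IsDismantlingList (A.toList ++ lB) := hB.append fun a ha => by
    obtain ⟨w, hw, hdom⟩ := hA a (Finset.mem_toList.1 ha)
    exact ⟨w, (hmemB w).2 hw, (ne_of_mem_of_not_mem (Finset.mem_toList.1 ha) hw).symm,
      fun u _ => hdom u⟩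
  obtain ⟨e, he⟩ := List.exists_equiv_ofFn_eq (l := A.toList ++ lB)
    (List.nodup_append.2 ⟨A.nodup_toList, Multiset.coe_nodup.1 (hlB ▸ (Finset.univ \ A).nodup),
      fun a ha b hb => ne_of_mem_of_not_mem (Finset.mem_toList.1 ha) ((hmemB b).1 hb)⟩)
    fun x => List.mem_append.2 ((Classical.em (x ∈ A)).imp Finset.mem_toList.2 (hmemB x).2)
  have hlen (i : Fin (Fintype.card V)) : (i : ℕ) < (A.toList ++ lB).length := by simp [← he]
  have hget (i : Fin (Fintype.card V)) : (A.toList ++ lB)[(i : ℕ)]'(hlen i) = e i := by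
    simp [← he]
  refine ⟨e, (isDismantlingList_ofFn e).1 (he ▸ hL), fun p q hp hq => Fin.lt_def.2 ?_⟩
  exact List.lt_of_getElem_append (p := (· ∈ A)) (fun x hx => Finset.mem_toList.1 hx)
    (fun x hx => (hmemB x).1 hx) (hlen p) (hlen q) (by rwa [hget]) (by rwa [hget])

end Fintype

end RefGraph

theorem dismantling_rank_one_first_general
    {V : Type*} [Fintype V] (G : RefGraph V)
    (hd : G.HasDismantling) :
    ∃ e : Fin (Fintype.card V) ≃ V, G.IsDismantlingOrdering e ∧
      ∀ p q : Fin (Fintype.card V), G.cr (e p) = 1 → 1 < G.cr (e q) → p < q := by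
  set A : Finset V := Finset.univ.filter (G.IsStrictCorner Set.univ)
  have hA (a : V) : ∃ w ∉ A, ∀ u, G.Adj a u → G.Adj w u := by
    obtain ⟨w, hdom, hw⟩ := RefGraph.exists_corners_not_isStrictCorner (G := G) a
    exact ⟨w, by simpa [A] using hw, hdom⟩
  have hB : G.IsDismantlable (Finset.univ \ A) := hd.isDismantlable_univ.sdiff A fun a _ => by
    obtain ⟨w, hw, hdom⟩ := hA a
    exact ⟨w, by simpa using hw, fun u _ => hdom u⟩
  obtain ⟨e, he, hlt⟩ := hB.exists_isDismantlingOrdering_prepend fun a _ => hA a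
  refine ⟨e, he, fun p q hp hq => ?_⟩
  obtain ⟨hq_corner, hq_clique⟩ := not_or.1 (mt RefGraph.cr_le_one_iff.2 hq.not_ge)
  have hp_corner := (RefGraph.cr_le_one_iff.1 hp.le).resolve_right hq_clique
  exact hlt p q (by simpa [A] using hp_corner) (by simpa [A] using hq_corner)

/-- If a graph has a dismantling ordering, then it has a
dismantling ordering in which every vertex of corner rank `1` appears before
every vertex of corner rank greater than `1`. -/
theorem dismantling_rank_one_first
    {V : Type*} [Fintype V] [Nonempty V] (G : RefGraph V)
    (hd : G.HasDismantling) :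
    ∃ e : Fin (Fintype.card V) ≃ V, G.IsDismantlingOrdering e ∧
      ∀ p q : Fin (Fintype.card V), G.cr (e p) = 1 → 1 < G.cr (e q) → p < q :=
  dismantling_rank_one_first_general G hd
end
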